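/- arXiv:2108.10119 — 4 statements merged into one kernel-verified Lean document; each statement's English description precedes it below -/
import Mathlib

section
/- Let (Ω, μ) be a probability space, let ψ : Ω → ℝ be a nonnegative integrable random variable, and let a ≥ 0 be a real constant (the image-leakage ratio ILR). Set J = ∫ ψ dμ. Then the ergodic capacity satisfies ∫ (1/2)·logb 2 (1 + ψ(ω)/(a·ψ(ω) + 1)) dμ(ω) ≤ (1/2)·logb 2 (1 + J/(a·J + 1)). -/
open MeasureTheory Set Real

/-!
The integrand is `g ∘ ψ` with `g x = (1/2) log₂ (1 + x / (a x + 1))`, and the bound is Jensen's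
inequality `∫ g ∘ ψ ≤ g (∫ ψ)`. The function `g` is concave on `[0, ∞)`: `x ↦ x / (a x + 1)` is
concave there, and the logarithm of a positive concave function is concave. Integrability of
`g ∘ ψ` comes from `0 ≤ g x ≤ x`.
-/

theorem ConcaveOn.log {E : Type*} [AddCommMonoid E] [Module ℝ E] {s : Set E} {f : E → ℝ}
    (hf : ConcaveOn ℝ s f) (hpos : ∀ x ∈ s, 0 < f x) : ConcaveOn ℝ s fun x => Real.log (f x) := by
  refine ⟨hf.1, fun x hx y hy p q hp hq hpq => ?_⟩
  calc p • Real.log (f x) + q • Real.log (f y) ≤ Real.log (p • f x + q • f y) :=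
        strictConcaveOn_log_Ioi.concaveOn.2 (hpos x hx) (hpos y hy) hp hq hpq
    _ ≤ Real.log (f (p • x + q • y)) :=
        log_le_log (convex_Ioi (0 : ℝ) (hpos x hx) (hpos y hy) hp hq hpq) (hf.2 hx hy hp hq hpq)

theorem ConcaveOn.logb {E : Type*} [AddCommMonoid E] [Module ℝ E] {s : Set E} {f : E → ℝ}
    {b : ℝ} (hb : 1 ≤ b) (hf : ConcaveOn ℝ s f) (hpos : ∀ x ∈ s, 0 < f x) :
    ConcaveOn ℝ s fun x => logb b (f x) := by
  simpa only [Real.logb, div_eq_inv_mul, smul_eq_mul] using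
    (hf.log hpos).smul (inv_nonneg.2 (log_nonneg hb))

theorem concaveOn_div_mul_add_one {a : ℝ} (ha : 0 ≤ a) :
    ConcaveOn ℝ (Ici 0) fun x : ℝ => x / (a * x + 1) := by
  refine ⟨convex_Ici 0, fun x hx y hy p q hp hq hpq => ?_⟩
  simp only [mem_Ici, smul_eq_mul] at *
  have hx' : 0 < a * x + 1 := by positivity
  have hy' : 0 < a * y + 1 := by positivity
  have hz : 0 < a * (p * x + q * y) + 1 := by positivity
  rw [mul_div_assoc', mul_div_assoc', div_add_div _ _ hx'.ne' hy'.ne',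
    div_le_div_iff₀ (by positivity) hz]
  obtain rfl : q = 1 - p := by linarith
  -- after clearing denominators, the gap is exactly `a p q (x - y)²`
  nlinarith [mul_nonneg (mul_nonneg (mul_nonneg ha hp) hq) (sq_nonneg (x - y))]

theorem concaveOn_half_logb_two_one_add_div {a : ℝ} (ha : 0 ≤ a) :
    ConcaveOn ℝ (Ici 0) fun x : ℝ => 1 / 2 * logb 2 (1 + x / (a * x + 1)) := by
  have hconc : ConcaveOn ℝ (Ici 0) fun x : ℝ => 1 + x / (a * x + 1) :=
    (concaveOn_const 1 (convex_Ici 0)).add (concaveOn_div_mul_add_one ha)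
  have hpos : ∀ x ∈ Ici (0 : ℝ), 0 < 1 + x / (a * x + 1) := fun x (hx : 0 ≤ x) => by positivity
  simpa only [smul_eq_mul] using (hconc.logb one_le_two hpos).smul (by norm_num : (0 : ℝ) ≤ 1 / 2)

theorem continuousOn_half_logb_two_one_add_div {a : ℝ} (ha : 0 ≤ a) :
    ContinuousOn (fun x : ℝ => 1 / 2 * logb 2 (1 + x / (a * x + 1))) (Ici 0) := by
  refine continuousOn_const.mul (ContinuousOn.logb ?_ fun x (hx : 0 ≤ x) => by positivity)
  fun_prop (disch := intro x (hx : 0 ≤ x); positivity)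

theorem norm_half_logb_two_one_add_le {u : ℝ} (hu : 0 ≤ u) : ‖1 / 2 * logb 2 (1 + u)‖ ≤ u := by
  have hnonneg : 0 ≤ logb 2 (1 + u) := logb_nonneg one_lt_two (by linarith)
  have hlog : Real.log (1 + u) ≤ u := by linarith [log_le_sub_one_of_pos (by positivity : 0 < 1 + u)]
  have hlog2 : 1 / 2 < Real.log 2 := by linarith [log_two_gt_d9]
  rw [Real.norm_of_nonneg (by positivity), Real.logb, ← mul_div_assoc, div_le_iff₀ (by linarith)]
  nlinarith

/-- Theorem 1 (upper bound on the ergodic capacity): for a nonnegative integrable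
SNR random variable `ψ` and image-leakage ratio `a ≥ 0`, the ergodic capacity
`∫ (1/2)·log₂(1 + ψ/(a·ψ+1))` is bounded by `(1/2)·log₂(1 + J/(a·J+1))` with `J = ∫ ψ`. -/
theorem ergodic_capacity_upper_bound {Ω : Type*} [MeasurableSpace Ω]
    (μ : Measure Ω) [IsProbabilityMeasure μ]
    (ψ : Ω → ℝ) (hψ0 : ∀ ω, 0 ≤ ψ ω) (hψint : Integrable ψ μ)
    (a : ℝ) (ha : 0 ≤ a) :
    ∫ ω, (1 / 2) * Real.logb 2 (1 + ψ ω / (a * ψ ω + 1)) ∂μ ≤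
      (1 / 2) * Real.logb 2 (1 + (∫ ω, ψ ω ∂μ) / (a * (∫ ω, ψ ω ∂μ) + 1)) := by
  have hmeas : Measurable fun x : ℝ => 1 / 2 * logb 2 (1 + x / (a * x + 1)) := by
    unfold Real.logb
    fun_prop
  have hint : Integrable (fun ω => 1 / 2 * logb 2 (1 + ψ ω / (a * ψ ω + 1))) μ := by
    refine hψint.mono' (hmeas.comp_aemeasurable hψint.aemeasurable).aestronglyMeasurable
      (ae_of_all _ fun ω => ?_)
    have hψω := hψ0 ω
    exact (norm_half_logb_two_one_add_le (by positivity)).trans (div_le_self hψω (by nlinarith))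
  exact (concaveOn_half_logb_two_one_add_div ha).le_map_integral
    (continuousOn_half_logb_two_one_add_div ha) isClosed_Ici (ae_of_all _ hψ0) hψint hint
end

section
/- Let N, m be natural numbers with 1 ≤ m ≤ N, let γ̄₁ > 0 and 0 ≤ ρ ≤ 1 be real constants, and define f : ℝ → ℝ by f(x) = m·(N choose m)·∑_{n=0}^{m−1} (−1)ⁿ·((m−1) choose n)·(1/(((N−m+n)·(1−ρ)+1)·γ̄₁))·exp(−(N−m+n+1)·x/(((N−m+n)·(1−ρ)+1)·γ̄₁)). Then ∫_{0}^{∞} f(x) dx = 1. -/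
/-!
Each summand of the density is an exponential density up to a constant, so integrating term by term
leaves `m * C(N, m) * ∑_{n<m} (-1)ⁿ C(m-1, n) / (N - m + n + 1)`, independently of `ρ` and `γ̄₁`.
The alternating sum is the expansion of the Beta integral `∫₀¹ t^(N-m) (1-t)^(m-1) dt`, that is
`(N-m)! (m-1)! / N!`, which cancels the prefactor `m * C(N, m)`.
-/

open MeasureTheory Set Finset Real Nat

section ExpIntegral

variable {a b : ℝ}

lemma integrableOn_exp_neg_mul_div_Ioi (ha : 0 < a) (hb : 0 < b) :
    IntegrableOn (fun x => exp (-(b * x) / a)) (Ioi 0) := by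
  simp_rw [neg_div, mul_div_right_comm, ← neg_mul]
  exact integrableOn_exp_mul_Ioi (neg_neg_of_pos (div_pos hb ha)) 0

lemma integral_exp_neg_mul_div_Ioi (ha : 0 < a) (hb : 0 < b) :
    ∫ x in Ioi 0, exp (-(b * x) / a) = a / b := by
  simp_rw [neg_div, mul_div_right_comm, ← neg_mul]
  rw [integral_exp_mul_Ioi (neg_neg_of_pos (div_pos hb ha)), mul_zero, exp_zero]
  field_simp

end ExpIntegral

lemma sum_range_neg_one_pow_mul_choose_div (k a : ℕ) :
    ∑ n ∈ range (k + 1), (-1 : ℝ) ^ n * k.choose n / (a + n + 1) =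
      a ! * k ! / (a + k + 1)! := by
  induction k generalizing a with
  | zero => simp [Nat.factorial_succ]; field_simp
  | succ k ih =>
    have pascal : ∑ n ∈ range (k + 2), (-1 : ℝ) ^ n * (k + 1).choose n / (a + n + 1) =
        ∑ n ∈ range (k + 1), (-1 : ℝ) ^ n * k.choose n / (a + n + 1) -
          ∑ n ∈ range (k + 1), (-1 : ℝ) ^ n * k.choose n / ((a + 1 : ℕ) + n + 1) := by
      have extend : ∑ n ∈ range (k + 2), (-1 : ℝ) ^ n * k.choose n / (a + n + 1) =
          ∑ n ∈ range (k + 1), (-1 : ℝ) ^ n * k.choose n / (a + n + 1) := by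
        simp [sum_range_succ _ (k + 1)]
      rw [← extend, sum_range_succ' _ (k + 1), sum_range_succ' _ (k + 1), ← sub_add_eq_add_sub,
        ← sum_sub_distrib]
      congr 1
      · refine sum_congr rfl fun n _ => ?_
        push_cast [Nat.choose_succ_succ']
        ring
      · simp
    rw [pascal, ih, ih]
    simp only [Nat.factorial_succ, show a + 1 + k + 1 = a + k + 1 + 1 by ring,
      show a + (k + 1) + 1 = a + k + 1 + 1 by ring]
    push_cast
    field_simp
    ring

lemma mul_choose_mul_sum_neg_one_pow_mul_choose_div (a k : ℕ) :
    ((k + 1 : ℕ) : ℝ) * (a + (k + 1)).choose (k + 1) *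
      ∑ n ∈ range (k + 1), (-1 : ℝ) ^ n * k.choose n / (a + n + 1) = 1 := by
  have h := add_choose_mul_factorial_mul_factorial a (k + 1)
  rw [Nat.factorial_succ] at h
  rw [sum_range_neg_one_pow_mul_choose_div, show a + k + 1 = a + (k + 1) by ring, ← h]
  have := (a + (k + 1)).choose_pos (Nat.le_add_left (k + 1) a)
  push_cast
  field_simp

theorem prs_pdf_integrates_to_one_general (N m : ℕ) (h1 : 1 ≤ m) (h2 : m ≤ N)
    (γ1 ρ : ℝ) (hγ : 0 < γ1) (hρ1 : ρ ≤ 1) :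
    ∫ x in Set.Ioi (0 : ℝ),
      (m : ℝ) * (N.choose m) *
        ∑ n ∈ Finset.range m,
          (-1 : ℝ) ^ n * ((m - 1).choose n) *
            (1 / ((((N : ℝ) - m + n) * (1 - ρ) + 1) * γ1)) *
            Real.exp (-(((N : ℝ) - m + n + 1) * x) /
              ((((N : ℝ) - m + n) * (1 - ρ) + 1) * γ1)) = 1 := by
  obtain ⟨k, rfl⟩ := Nat.exists_eq_add_of_le' h1
  obtain ⟨a, rfl⟩ := Nat.exists_eq_add_of_le' h2
  have hsub : ((a + (k + 1) : ℕ) : ℝ) - (k + 1 : ℕ) = a := by push_cast; ring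
  simp only [hsub, Nat.add_sub_cancel]
  have hA : ∀ n : ℕ, 0 < ((a + n : ℝ) * (1 - ρ) + 1) := fun n => by
    have := mul_nonneg (by positivity : (0 : ℝ) ≤ a + n) (sub_nonneg.2 hρ1)
    positivity
  have hB : ∀ n : ℕ, (0 : ℝ) < a + n + 1 := fun n => by positivity
  rw [integral_const_mul, integral_finsetSum _ fun n _ =>
    (integrableOn_exp_neg_mul_div_Ioi (mul_pos (hA n) hγ) (hB n)).const_mul _]
  simp only [integral_const_mul, integral_exp_neg_mul_div_Ioi (mul_pos (hA _) hγ) (hB _)]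
  convert mul_choose_mul_sum_neg_one_pow_mul_choose_div a k using 2
  refine sum_congr rfl fun n _ => ?_
  field_simp [(hA n).ne']

/-- The PDF of the first-hop SNR under partial relay selection with outdated CSI
(Eq. (14)) integrates to one over `[0, ∞)`. -/
theorem prs_pdf_integrates_to_one (N m : ℕ) (h1 : 1 ≤ m) (h2 : m ≤ N)
    (γ1 ρ : ℝ) (hγ : 0 < γ1) (hρ0 : 0 ≤ ρ) (hρ1 : ρ ≤ 1) :
    ∫ x in Set.Ioi (0 : ℝ),
      (m : ℝ) * (N.choose m) *
        ∑ n ∈ Finset.range m,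
          (-1 : ℝ) ^ n * ((m - 1).choose n) *
            (1 / ((((N : ℝ) - m + n) * (1 - ρ) + 1) * γ1)) *
            Real.exp (-(((N : ℝ) - m + n + 1) * x) /
              ((((N : ℝ) - m + n) * (1 - ρ) + 1) * γ1)) = 1 :=
  prs_pdf_integrates_to_one_general N m h1 h2 γ1 ρ hγ hρ1
end

section
/- Let σ > 0 and A > 0 be real constants, and set x = A²/σ². Then ∫_{0}^{∞} r · (A²·r/(A² + r²)) · (2·r/σ²) · exp(−r²/σ²) dr = A² · (1 − x · exp(x) · ∫_{x}^{∞} (exp(−t)/t) dt). -/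
/-!
Substituting `u = r²/σ²` turns the integral into `A² ∫₀^∞ u/(x+u) e^{-u} du`, `x = A²/σ²`.
Writing `u/(x+u) = 1 - x/(x+u)` leaves `x ∫₀^∞ e^{-u}/(x+u) du`, which the shift
`t = x + u` turns into `x eˣ ∫ₓ^∞ e^{-t}/t dt`.
-/

open MeasureTheory Set Real

section

variable {E : Type*} [NormedAddCommGroup E] [NormedSpace ℝ E]

theorem integral_Ioi_eq_integral_Ioi_zero_comp_add (f : ℝ → E) (a : ℝ) :
    ∫ t in Ioi a, f t = ∫ u in Ioi 0, f (u + a) := by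
  have h := (measurePreserving_add_right volume a).setIntegral_preimage_emb
    (measurableEmbedding_addRight a) f (Ioi a)
  rwa [preimage_add_const_Ioi, sub_self, eq_comm] at h

theorem integral_Ioi_comp_sq_div (f : ℝ → E) {c : ℝ} (hc : 0 < c) :
    ∫ r in Ioi 0, (2 * r / c) • f (r ^ 2 / c) = ∫ u in Ioi 0, f u := by
  have hsq := integral_comp_rpow_Ioi_of_pos (g := fun y => c⁻¹ • f (c⁻¹ * y)) two_pos
  have hscale := integral_comp_mul_left_Ioi f 0 (inv_pos.2 hc)
  rw [integral_smul, hscale, mul_zero, inv_inv, inv_smul_smul₀ hc.ne'] at hsq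
  rw [← hsq]
  refine setIntegral_congr_fun measurableSet_Ioi fun r _ => ?_
  norm_num [smul_smul, div_eq_mul_inv, mul_comm c⁻¹]

end

theorem integrableOn_exp_neg_div_add {x : ℝ} (hx : 0 < x) :
    IntegrableOn (fun u => exp (-u) / (x + u)) (Ioi 0) := by
  refine ((exp_neg_integrableOn_Ioi 0 one_pos).const_mul x⁻¹).mono' ?_ ?_
  · refine ContinuousOn.aestronglyMeasurable ?_ measurableSet_Ioi
    fun_prop (disch := intro u (hu : 0 < u); positivity)
  · filter_upwards [ae_restrict_mem measurableSet_Ioi] with u (hu : 0 < u)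
    rw [norm_of_nonneg (by positivity), div_eq_inv_mul, neg_one_mul]
    gcongr
    linarith

theorem integral_exp_neg_div_add (x : ℝ) :
    ∫ u in Ioi 0, exp (-u) / (x + u) = exp x * ∫ t in Ioi x, exp (-t) / t := by
  rw [integral_Ioi_eq_integral_Ioi_zero_comp_add _ x, ← integral_const_mul]
  refine setIntegral_congr_fun measurableSet_Ioi fun u _ => ?_
  rw [add_comm u x, neg_add, exp_add, ← mul_div_assoc, ← mul_assoc, ← exp_add, add_neg_cancel,
    exp_zero, one_mul]

theorem integral_div_add_mul_exp_neg {x : ℝ} (hx : 0 < x) :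
    ∫ u in Ioi 0, u / (x + u) * exp (-u) = 1 - x * ∫ u in Ioi 0, exp (-u) / (x + u) := by
  have hexp : IntegrableOn (fun u => exp (-u)) (Ioi 0) := by
    simpa using exp_neg_integrableOn_Ioi 0 one_pos
  rw [← integral_exp_neg_Ioi_zero, ← integral_const_mul,
    ← integral_sub hexp ((integrableOn_exp_neg_div_add hx).const_mul x)]
  refine setIntegral_congr_fun measurableSet_Ioi fun u (hu : 0 < u) => ?_
  field_simp
  ring

/-- Cross-correlation of the TWTA output with its Rayleigh input (Bussgang linear
gain of the TWTA model, Eq. (8)), with `x = A²/σ²`: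
`∫₀^∞ r·(A²r/(A²+r²))·(2r/σ²)·e^{−r²/σ²} dr = A²·(1 − x·eˣ·∫ₓ^∞ e^{−t}/t dt)`. -/
theorem twta_cross_correlation (σ A : ℝ) (hσ : 0 < σ) (hA : 0 < A) :
    ∫ r in Set.Ioi (0 : ℝ),
      r * (A ^ 2 * r / (A ^ 2 + r ^ 2)) * (2 * r / σ ^ 2) * Real.exp (-r ^ 2 / σ ^ 2) =
      A ^ 2 * (1 - (A ^ 2 / σ ^ 2) * Real.exp (A ^ 2 / σ ^ 2) *
        ∫ t in Set.Ioi (A ^ 2 / σ ^ 2), Real.exp (-t) / t) := by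
  set x := A ^ 2 / σ ^ 2 with hx_def
  have hx : 0 < x := by positivity
  have hintegrand : ∀ r : ℝ,
      r * (A ^ 2 * r / (A ^ 2 + r ^ 2)) * (2 * r / σ ^ 2) * exp (-r ^ 2 / σ ^ 2) =
        (2 * r / σ ^ 2) •
          (A ^ 2 * ((r ^ 2 / σ ^ 2) / (x + r ^ 2 / σ ^ 2) * exp (-(r ^ 2 / σ ^ 2)))) := by
    intro r
    rw [smul_eq_mul, neg_div, hx_def]
    field_simp
  simp_rw [hintegrand]
  rw [integral_Ioi_comp_sq_div (fun u => A ^ 2 * (u / (x + u) * exp (-u))) (by positivity),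
    integral_const_mul, integral_div_add_mul_exp_neg hx, integral_exp_neg_div_add, mul_assoc x]
end

section
/- Let σ > 0 and A > 0 be real constants, and set x = A²/σ². Then ∫_{0}^{∞} (A²·r/(A² + r²))² · (2·r/σ²) · exp(−r²/σ²) dr = (A⁴/σ²) · ((1 + x) · exp(x) · ∫_{x}^{∞} (exp(−t)/t) dt − 1). -/
/-!
The substitution `t = (A² + r²)/σ²` turns the integral into
`(A⁴/σ²) eˣ ∫ₓ^∞ (t - x) e⁻ᵗ/t² dt`. Splitting `(t - x)/t² = 1/t - x/t²` and integrating
`e⁻ᵗ/t²` by parts against the antiderivative `-e⁻ᵗ/t` of `e⁻ᵗ/t + e⁻ᵗ/t²` leaves only the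
exponential integral `∫ₓ^∞ e⁻ᵗ/t dt` and the boundary term `e⁻ˣ`.
-/

open MeasureTheory Real Set Filter Topology

theorem integrableOn_exp_neg_div_pow_Ioi {x : ℝ} (hx : 0 < x) (n : ℕ) :
    IntegrableOn (fun t => exp (-t) / t ^ n) (Ioi x) := by
  have hexp : IntegrableOn (fun t => exp (-t)) (Ioi x) := by
    simpa using exp_neg_integrableOn_Ioi x one_pos
  simp only [div_eq_inv_mul]
  refine hexp.bdd_mul (c := (x ^ n)⁻¹) ?_ ?_
  · exact (continuousOn_id.pow n |>.inv₀ fun t ht => pow_ne_zero n (hx.trans ht).ne')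
      |>.aestronglyMeasurable measurableSet_Ioi
  · filter_upwards [ae_restrict_mem measurableSet_Ioi] with t ht
    rw [norm_inv, norm_pow, Real.norm_of_nonneg (hx.trans ht).le]
    exact inv_anti₀ (by positivity) (pow_le_pow_left₀ hx.le ht.out.le n)

theorem integrableOn_exp_neg_div_Ioi {x : ℝ} (hx : 0 < x) :
    IntegrableOn (fun t => exp (-t) / t) (Ioi x) := by
  simpa using integrableOn_exp_neg_div_pow_Ioi hx 1

theorem integral_exp_neg_div_sq_Ioi {x : ℝ} (hx : 0 < x) :
    ∫ t in Ioi x, exp (-t) / t ^ 2 = exp (-x) / x - ∫ t in Ioi x, exp (-t) / t := by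
  have hint1 := integrableOn_exp_neg_div_Ioi hx
  have hint2 := integrableOn_exp_neg_div_pow_Ioi hx 2
  have hderiv : ∀ t ∈ Ici x,
      HasDerivAt (fun t => -exp (-t) / t) (exp (-t) / t + exp (-t) / t ^ 2) t := by
    intro t ht
    have ht0 : t ≠ 0 := (hx.trans_le ht).ne'
    refine (((hasDerivAt_neg t).exp.neg).div (hasDerivAt_id t) ht0).congr_deriv ?_
    simp only [id, Pi.neg_apply]
    field_simp
    ring
  have hlim : Tendsto (fun t => -exp (-t) / t) atTop (𝓝 0) := by
    simpa [div_eq_mul_inv] using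
      tendsto_exp_neg_atTop_nhds_zero.neg.mul tendsto_inv_atTop_zero
  have hFTC := integral_Ioi_of_hasDerivAt_of_tendsto' hderiv (hint1.add hint2) hlim
  rw [integral_add hint1 hint2, neg_div, zero_sub, neg_neg] at hFTC
  linarith

theorem integral_sub_mul_exp_neg_div_sq_Ioi {x : ℝ} (hx : 0 < x) :
    ∫ t in Ioi x, (t - x) * exp (-t) / t ^ 2 =
      (1 + x) * (∫ t in Ioi x, exp (-t) / t) - exp (-x) := by
  have hsplit : EqOn (fun t => (t - x) * exp (-t) / t ^ 2)
      (fun t => exp (-t) / t - x * (exp (-t) / t ^ 2)) (Ioi x) := by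
    intro t ht
    have ht0 : t ≠ 0 := (hx.trans ht).ne'
    field_simp
  rw [setIntegral_congr_fun measurableSet_Ioi hsplit,
    integral_sub (integrableOn_exp_neg_div_Ioi hx)
      ((integrableOn_exp_neg_div_pow_Ioi hx 2).const_mul x),
    integral_const_mul, integral_exp_neg_div_sq_Ioi hx]
  field_simp
  ring

theorem integral_Ioi_comp_add_sq_div {E : Type*} [NormedAddCommGroup E] [NormedSpace ℝ E]
    (f : ℝ → E) (a : ℝ) {b : ℝ} (hb : 0 < b) :
    ∫ r in Ioi 0, (2 * r / b) • f (a + r ^ 2 / b) = ∫ t in Ioi a, f t := by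
  have himage : (fun r => a + r ^ 2 / b) '' Ioi 0 = Ioi a := by
    ext t
    constructor
    · rintro ⟨r, hr, rfl⟩
      have : 0 < r ^ 2 / b := by have := hr.out; positivity
      exact lt_add_of_pos_right a this
    · intro ht
      have htab : 0 < (t - a) * b := mul_pos (sub_pos.2 ht) hb
      refine ⟨sqrt ((t - a) * b), sqrt_pos.2 htab, ?_⟩
      dsimp only
      rw [sq_sqrt htab.le]
      field_simp
      ring
  have hderiv : ∀ r ∈ Ioi (0 : ℝ),
      HasDerivWithinAt (fun r => a + r ^ 2 / b) (2 * r / b) (Ioi 0) r := by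
    intro r _
    simpa using (((hasDerivAt_pow 2 r).div_const b).const_add a).hasDerivWithinAt
  have hinj : InjOn (fun r => a + r ^ 2 / b) (Ioi 0) := by
    intro r hr s hs hrs
    have : r ^ 2 = s ^ 2 := by simpa [hb.ne'] using hrs
    exact (pow_left_inj₀ hr.out.le hs.out.le two_ne_zero).1 this
  rw [← himage, integral_image_eq_integral_abs_deriv_smul measurableSet_Ioi hderiv hinj]
  refine setIntegral_congr_fun measurableSet_Ioi fun r hr => ?_
  rw [abs_of_pos (by have := hr.out; positivity)]

/-- Second moment of the TWTA output over a Rayleigh envelope (TWTA clipping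
factor, Eq. (9)), with `x = A²/σ²`:
`∫₀^∞ (A²r/(A²+r²))²·(2r/σ²)·e^{−r²/σ²} dr = (A⁴/σ²)·((1+x)·eˣ·∫ₓ^∞ e^{−t}/t dt − 1)`. -/
theorem twta_second_moment (σ A : ℝ) (hσ : 0 < σ) (hA : 0 < A) :
    ∫ r in Set.Ioi (0 : ℝ),
      (A ^ 2 * r / (A ^ 2 + r ^ 2)) ^ 2 * (2 * r / σ ^ 2) * Real.exp (-r ^ 2 / σ ^ 2) =
      (A ^ 4 / σ ^ 2) * ((1 + A ^ 2 / σ ^ 2) * Real.exp (A ^ 2 / σ ^ 2) *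
        (∫ t in Set.Ioi (A ^ 2 / σ ^ 2), Real.exp (-t) / t) - 1) := by
  set x := A ^ 2 / σ ^ 2 with hx_def
  have hx : 0 < x := by positivity
  have hsubst := integral_Ioi_comp_add_sq_div
    (fun t => A ^ 4 / σ ^ 2 * exp x * ((t - x) * exp (-t) / t ^ 2)) x (pow_pos hσ 2)
  simp only [smul_eq_mul] at hsubst
  have hintegrand : EqOn
      (fun r => (A ^ 2 * r / (A ^ 2 + r ^ 2)) ^ 2 * (2 * r / σ ^ 2) * exp (-r ^ 2 / σ ^ 2))
      (fun r => 2 * r / σ ^ 2 * (A ^ 4 / σ ^ 2 * exp x *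
        ((x + r ^ 2 / σ ^ 2 - x) * exp (-(x + r ^ 2 / σ ^ 2)) / (x + r ^ 2 / σ ^ 2) ^ 2)))
      (Ioi 0) := by
    intro r _
    have hexp : exp (-r ^ 2 / σ ^ 2) = exp x * exp (-(x + r ^ 2 / σ ^ 2)) := by
      rw [← exp_add]
      ring_nf
    simp only [hexp, hx_def]
    field_simp
    ring
  rw [setIntegral_congr_fun measurableSet_Ioi hintegrand, hsubst, integral_const_mul,
    integral_sub_mul_exp_neg_div_sq_Ioi hx, exp_neg]
  field_simp
end
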